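/- Paintbucket on the complete bipartite graph K_{m,n} with m black and n white vertices: (a) if m > 1 and n > 1, the second player to move has a winning strategy; (b) if m > 1 and n = 1, Black wins regardless of who moves first; (c) if m = 1 and n > 1, White wins regardless of who moves first; (d) if m = n = 1, the first player wins. -/
import Mathlib


/-- A Paintbucket position: a colored graph on vertex type `V`, with a finite
set of live vertices, a coloring (`true` = black), and a boolean adjacency. -/
structure PB (V : Type) where
  verts : Finset V
  black : V → Bool
  adj : V → V → Bool

namespace PB

variable {V : Type} [DecidableEq V]

/-- The neighbors of `v` among the live vertices. -/
def nbrs (P : PB V) (v : V) : Finset V :=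
  P.verts.filter fun w => P.adj v w = true

/-- The move of player `p` (`true` = Black) at vertex `v`: delete the
neighbors of `v`, recolor `v` with the mover's color, and connect `v` to all
former neighbors of the deleted vertices. -/
def move (p : Bool) (P : PB V) (v : V) : PB V :=
  let del := P.nbrs v
  let vs := insert v (P.verts \ del)
  { verts := vs
    black := fun x => if x = v then p else P.black x
    adj := fun x y =>
      decide (x ∈ vs) && decide (y ∈ vs) && decide (x ≠ y) &&
        (if x = v then P.adj v y || decide (∃ w ∈ del, P.adj w y = true)
         else if y = v then P.adj v x || decide (∃ w ∈ del, P.adj w x = true)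
         else P.adj x y) }

/-- Player `p` may move at `v` iff the game is not over (at least two vertices
remain), `v` is live, and `v` has the opponent's color. -/
def legal (p : Bool) (P : PB V) (v : V) : Prop :=
  1 < P.verts.card ∧ v ∈ P.verts ∧ P.black v = !p

instance (p : Bool) (P : PB V) (v : V) : Decidable (legal p P v) := by
  unfold legal; infer_instance

/-- `blackWinsAux n p P`: with fuel `n` and player `p` to move, Black wins
with optimal play. When the game is over, Black wins iff the remaining vertex
is black. -/
def blackWinsAux : ℕ → Bool → PB V → Prop
  | 0, _, P => ∃ v ∈ P.verts, P.black v = true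
  | n + 1, p, P =>
    if P.verts.card ≤ 1 then ∃ v ∈ P.verts, P.black v = true
    else if p then ∃ v, legal true P v ∧ blackWinsAux n false (move true P v)
    else ∀ v, legal false P v → blackWinsAux n true (move false P v)

/-- Black wins with `p` to move (fuel `P.verts.card` suffices since every move
in a connected position removes at least one vertex). -/
def blackWins (p : Bool) (P : PB V) : Prop :=
  blackWinsAux P.verts.card p P

/-- The coloring is proper: edges join vertices of different colors. -/
def Bipartite (P : PB V) : Prop :=
  ∀ x y, P.adj x y = true → P.black x ≠ P.black y

/-- Any two live vertices are joined by a path. -/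
def Connected (P : PB V) : Prop :=
  ∀ x ∈ P.verts, ∀ y ∈ P.verts,
    Relation.ReflTransGen (fun a b => P.adj a b = true) x y

/-- A valid Paintbucket position: symmetric irreflexive adjacency supported on
the live vertices, properly two-colored, and connected. -/
def Valid (P : PB V) : Prop :=
  (∀ x y, P.adj x y = P.adj y x) ∧
  (∀ x, P.adj x x = false) ∧
  (∀ x y, P.adj x y = true → x ∈ P.verts ∧ y ∈ P.verts) ∧
  P.Bipartite ∧ P.Connected

/-- Isomorphism of colored positions. -/
def Isom {W : Type} (P : PB V) (Q : PB W) : Prop :=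
  ∃ f : V → W, Set.BijOn f ↑P.verts ↑Q.verts ∧
    (∀ x ∈ P.verts, Q.black (f x) = P.black x) ∧
    ∀ x ∈ P.verts, ∀ y ∈ P.verts, Q.adj (f x) (f y) = P.adj x y

/-- Play out a list of (player, vertex) moves. -/
def run (P : PB V) : List (Bool × V) → PB V
  | [] => P
  | m :: ms => run (move m.1 P m.2) ms

/-- All moves in the list are legal when played in order. -/
def legalRun (P : PB V) : List (Bool × V) → Prop
  | [] => True
  | m :: ms => legal m.1 P m.2 ∧ legalRun (move m.1 P m.2) ms

end PB

/-- The complete bipartite Paintbucket position with `m` black and `n` white vertices. -/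
def Kmn (m n : ℕ) : PB (Fin m ⊕ Fin n) :=
  { verts := Finset.univ
    black := Sum.isLeft
    adj := fun x y => x.isLeft != y.isLeft }


namespace PB

variable {V : Type} [DecidableEq V]

lemma single_black {P : PB V} {v : V} (hv : P.verts = {v}) (hb : P.black v = true) :
    ∀ k p, blackWinsAux k p P := by
  intro k p
  have hcard : P.verts.card = 1 := by rw [hv]; simp
  have hex : ∃ x ∈ P.verts, P.black x = true := ⟨v, by simp [hv], hb⟩
  cases k with
  | zero => exact hex
  | succ k =>
    simp only [blackWinsAux]
    rw [if_pos (by omega)]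
    exact hex

lemma single_white {P : PB V} {v : V} (hv : P.verts = {v}) (hb : P.black v = false) :
    ∀ k p, ¬ blackWinsAux k p P := by
  intro k p
  have hcard : P.verts.card = 1 := by rw [hv]; simp
  have hex : ¬ ∃ x ∈ P.verts, P.black x = true := by
    rintro ⟨x, hx, hbx⟩
    rw [hv, Finset.mem_singleton] at hx
    rw [hx, hb] at hbx
    exact Bool.false_ne_true hbx
  cases k with
  | zero => exact hex
  | succ k =>
    simp only [blackWinsAux]
    rw [if_pos (by omega)]
    exact hex

lemma blackWinsAux_succ_true (k : ℕ) (P : PB V) (h : 1 < P.verts.card) :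
    blackWinsAux (k+1) true P ↔
      ∃ v, legal true P v ∧ blackWinsAux k false (move true P v) := by
  simp only [blackWinsAux]
  rw [if_neg (by omega), if_pos trivial]

lemma blackWinsAux_succ_false (k : ℕ) (P : PB V) (h : 1 < P.verts.card) :
    blackWinsAux (k+1) false P ↔
      ∀ v, legal false P v → blackWinsAux k true (move false P v) := by
  simp only [blackWinsAux]
  rw [if_neg (by omega), if_neg (by simp)]

/-- A star position with center `b` of color `c` and nonempty-or-empty leaf set `W`
of color `!c`, with edges exactly between the center and the leaves. -/
def Star (c : Bool) (P : PB V) (b : V) (W : Finset V) : Prop :=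
  P.verts = insert b W ∧ b ∉ W ∧ P.black b = c ∧ (∀ w ∈ W, P.black w = (!c)) ∧
  ∀ x ∈ P.verts, ∀ y ∈ P.verts, (P.adj x y = true ↔ (x = b ∧ y ∈ W) ∨ (x ∈ W ∧ y = b))

lemma star_nbrs {c : Bool} {P : PB V} {b : V} {W : Finset V} (h : Star c P b W) :
    P.nbrs b = W := by
  obtain ⟨hv, hbW, _, _, hadj⟩ := h
  have hbv : b ∈ P.verts := by simp [hv]
  ext x
  simp only [nbrs, Finset.mem_filter]
  constructor
  · rintro ⟨hx, ha⟩
    rcases (hadj b hbv x hx).1 ha with ⟨_, h2⟩ | ⟨h1, _⟩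
    · exact h2
    · exact absurd h1 hbW
  · intro hxW
    have hxv : x ∈ P.verts := by simp [hv, hxW]
    exact ⟨hxv, (hadj b hbv x hxv).2 (Or.inl ⟨rfl, hxW⟩)⟩

lemma star_move {c : Bool} {P : PB V} {b : V} {W : Finset V} (h : Star c P b W) (p : Bool) :
    (move p P b).verts = {b} ∧ (move p P b).black b = p := by
  constructor
  · show insert b (P.verts \ P.nbrs b) = {b}
    rw [star_nbrs h, h.1]
    ext x
    simp only [Finset.mem_insert, Finset.mem_sdiff, Finset.mem_singleton]
    constructor
    · rintro (rfl | ⟨rfl | hx, hxW⟩)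
      · rfl
      · rfl
      · exact absurd hx hxW
    · rintro rfl; exact Or.inl rfl
  · show (if b = b then p else P.black b) = p
    rw [if_pos rfl]

lemma star_legal {c : Bool} {P : PB V} {b : V} {W : Finset V} (h : Star c P b W)
    (hW : W.Nonempty) : legal (!c) P b := by
  refine ⟨?_, by simp [h.1], by simp [h.2.2.1]⟩
  rw [h.1, Finset.card_insert_of_notMem h.2.1]
  have := Finset.card_pos.2 hW
  omega

lemma star_black_wins {P : PB V} {b : V} {W : Finset V} (h : Star false P b W)
    (hW : W.Nonempty) (k : ℕ) : blackWinsAux (k+1) true P := by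
  have hleg : legal true P b := by simpa using star_legal h hW
  have hcard : 1 < P.verts.card := hleg.1
  rw [blackWinsAux_succ_true _ _ hcard]
  exact ⟨b, hleg, single_black (star_move h true).1 (star_move h true).2 k false⟩

lemma star_white_wins {P : PB V} {b : V} {W : Finset V} (h : Star true P b W)
    (hW : W.Nonempty) (k : ℕ) : ¬ blackWinsAux (k+1) false P := by
  have hleg : legal false P b := by simpa using star_legal h hW
  have hcard : 1 < P.verts.card := hleg.1
  rw [blackWinsAux_succ_false _ _ hcard]
  intro hw
  exact single_white (star_move h false).1 (star_move h false).2 k true (hw b hleg)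

lemma move_verts (p : Bool) (P : PB V) (v : V) :
    (move p P v).verts = insert v (P.verts \ P.nbrs v) := rfl

lemma move_black (p : Bool) (P : PB V) (v : V) (x : V) :
    (move p P v).black x = if x = v then p else P.black x := rfl

lemma move_adj (p : Bool) (P : PB V) (v : V) (x y : V) :
    (move p P v).adj x y =
      (decide (x ∈ (move p P v).verts) && decide (y ∈ (move p P v).verts) &&
        decide (x ≠ y) &&
        (if x = v then P.adj v y || decide (∃ w ∈ P.nbrs v, P.adj w y = true)
         else if y = v then P.adj v x || decide (∃ w ∈ P.nbrs v, P.adj w x = true)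
         else P.adj x y)) := rfl

end PB

open PB

lemma kmn_card (m n : ℕ) : (Kmn m n).verts.card = m + n := by
  simp [Kmn]

lemma kmn_legal_true {m n : ℕ} (h : 1 < m + n) (j : Fin n) :
    legal true (Kmn m n) (Sum.inr j) := by
  refine ⟨by rwa [kmn_card], by simp [Kmn], by simp [Kmn]⟩

lemma kmn_legal_false {m n : ℕ} (h : 1 < m + n) (i : Fin m) :
    legal false (Kmn m n) (Sum.inl i) := by
  refine ⟨by rwa [kmn_card], by simp [Kmn], by simp [Kmn]⟩

lemma kmn_legal_true_elim {m n : ℕ} {v : Fin m ⊕ Fin n}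
    (h : legal true (Kmn m n) v) : ∃ j, v = Sum.inr j := by
  rcases v with i | j
  · exact absurd h.2.2 (by simp [Kmn])
  · exact ⟨j, rfl⟩

lemma kmn_legal_false_elim {m n : ℕ} {v : Fin m ⊕ Fin n}
    (h : legal false (Kmn m n) v) : ∃ i, v = Sum.inl i := by
  rcases v with i | j
  · exact ⟨i, rfl⟩
  · exact absurd h.2.2 (by simp [Kmn])

set_option maxHeartbeats 1000000 in
lemma kmn_black_move {m n : ℕ} (hm : 0 < m) (j : Fin n) :
    Star true (move true (Kmn m n) (Sum.inr j)) (Sum.inr j)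
      (Finset.univ.filter fun x : Fin m ⊕ Fin n => x.isLeft = false ∧ x ≠ Sum.inr j) := by
  have hnbrs : (Kmn m n).nbrs (Sum.inr j) =
      Finset.univ.filter (fun x : Fin m ⊕ Fin n => x.isLeft = true) := by
    ext x
    rcases x with i | a <;> simp [nbrs, Kmn]
  have hverts : (move true (Kmn m n) (Sum.inr j)).verts =
      insert (Sum.inr j) (Finset.univ.filter
        fun x : Fin m ⊕ Fin n => x.isLeft = false ∧ x ≠ Sum.inr j) := by
    rw [move_verts, hnbrs]
    ext x
    rcases x with i | a
    · simp [Kmn]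
    · by_cases h : a = j <;> simp [Kmn, h]
  have hex : ∀ b : Fin n, ∃ w ∈ (Kmn m n).nbrs (Sum.inr j),
      (Kmn m n).adj w (Sum.inr b) = true :=
    fun b => ⟨Sum.inl ⟨0, hm⟩, by simp [hnbrs], rfl⟩
  refine ⟨hverts, by simp, by rw [move_black, if_pos rfl], ?_, ?_⟩
  · intro w hw
    rw [Finset.mem_filter] at hw
    rw [move_black, if_neg hw.2.2]
    exact hw.2.1
  · intro x hx y hy
    have hx0 := hx
    have hy0 := hy
    rw [hverts, Finset.mem_insert, Finset.mem_filter] at hx hy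
    rw [move_adj]
    rcases x with i | a
    · rcases hx with h | ⟨_, h, _⟩ <;> simp at h
    rcases y with i | b
    · rcases hy with h | ⟨_, h, _⟩ <;> simp at h
    have hww : ∀ a b : Fin n, (Kmn m n).adj (Sum.inr a) (Sum.inr b) = false :=
      fun _ _ => rfl
    have hexl : ∀ c : Fin n, ∃ w : Fin m, Sum.inl w ∈ (Kmn m n).nbrs (Sum.inr j) ∧
        (Kmn m n).adj (Sum.inl w) (Sum.inr c) = true :=
      fun c => ⟨⟨0, hm⟩, by simp [hnbrs], rfl⟩
    have hc : Sum.inr j ∈ (move true (Kmn m n) (Sum.inr j)).verts := by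
      rw [hverts]; simp
    by_cases haj : a = j <;> by_cases hbj : b = j <;>
      simp [hx0, hy0, hc, haj, hbj, hexl a, hexl b, hww] <;> tauto

set_option maxHeartbeats 1000000 in
lemma kmn_white_move {m n : ℕ} (hn : 0 < n) (i : Fin m) :
    Star false (move false (Kmn m n) (Sum.inl i)) (Sum.inl i)
      (Finset.univ.filter fun x : Fin m ⊕ Fin n => x.isLeft = true ∧ x ≠ Sum.inl i) := by
  have hnbrs : (Kmn m n).nbrs (Sum.inl i) =
      Finset.univ.filter (fun x : Fin m ⊕ Fin n => x.isLeft = false) := by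
    ext x
    rcases x with a | b <;> simp [nbrs, Kmn]
  have hverts : (move false (Kmn m n) (Sum.inl i)).verts =
      insert (Sum.inl i) (Finset.univ.filter
        fun x : Fin m ⊕ Fin n => x.isLeft = true ∧ x ≠ Sum.inl i) := by
    rw [move_verts, hnbrs]
    ext x
    rcases x with a | b
    · by_cases h : a = i <;> simp [Kmn, h]
    · simp [Kmn]
  have hex : ∀ a : Fin m, ∃ w ∈ (Kmn m n).nbrs (Sum.inl i),
      (Kmn m n).adj w (Sum.inl a) = true :=
    fun a => ⟨Sum.inr ⟨0, hn⟩, by simp [hnbrs], rfl⟩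
  refine ⟨hverts, by simp, by rw [move_black, if_pos rfl], ?_, ?_⟩
  · intro w hw
    rw [Finset.mem_filter] at hw
    rw [move_black, if_neg hw.2.2]
    exact hw.2.1
  · intro x hx y hy
    have hx0 := hx
    have hy0 := hy
    rw [hverts, Finset.mem_insert, Finset.mem_filter] at hx hy
    rw [move_adj]
    rcases x with a | bb
    case inr => rcases hx with h | ⟨_, h, _⟩ <;> simp at h
    rcases y with b | bb
    case inr => rcases hy with h | ⟨_, h, _⟩ <;> simp at h
    have hbb : ∀ a b : Fin m, (Kmn m n).adj (Sum.inl a) (Sum.inl b) = false :=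
      fun _ _ => rfl
    have hexr : ∀ c : Fin m, ∃ w : Fin n, Sum.inr w ∈ (Kmn m n).nbrs (Sum.inl i) ∧
        (Kmn m n).adj (Sum.inr w) (Sum.inl c) = true :=
      fun c => ⟨⟨0, hn⟩, by simp [hnbrs], rfl⟩
    have hc : Sum.inl i ∈ (move false (Kmn m n) (Sum.inl i)).verts := by
      rw [hverts]; simp
    by_cases hai : a = i <;> by_cases hbi : b = i <;>
      simp [hx0, hy0, hc, hai, hbi, hexr a, hexr b, hbb] <;> tauto


lemma kmn_whites_empty {m : ℕ} (j : Fin 1) :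
    (Finset.univ.filter fun x : Fin m ⊕ Fin 1 => x.isLeft = false ∧ x ≠ Sum.inr j) = ∅ := by
  ext x
  rcases x with i | a
  · simp
  · simp [Subsingleton.elim a j]

lemma kmn_blacks_empty {n : ℕ} (i : Fin 1) :
    (Finset.univ.filter fun x : Fin 1 ⊕ Fin n => x.isLeft = true ∧ x ≠ Sum.inl i) = ∅ := by
  ext x
  rcases x with a | b
  · simp [Subsingleton.elim a i]
  · simp

lemma kmn_whites_nonempty {m n : ℕ} (hn : 1 < n) (j : Fin n) :
    (Finset.univ.filter fun x : Fin m ⊕ Fin n => x.isLeft = false ∧ x ≠ Sum.inr j).Nonempty := by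
  have : Nontrivial (Fin n) := ⟨⟨0, by omega⟩, ⟨1, by omega⟩, by simp [Fin.ext_iff]⟩
  obtain ⟨j', hj'⟩ := exists_ne j
  exact ⟨Sum.inr j', by simp [hj']⟩

lemma kmn_blacks_nonempty {m n : ℕ} (hm : 1 < m) (i : Fin m) :
    (Finset.univ.filter fun x : Fin m ⊕ Fin n => x.isLeft = true ∧ x ≠ Sum.inl i).Nonempty := by
  have : Nontrivial (Fin m) := ⟨⟨0, by omega⟩, ⟨1, by omega⟩, by simp [Fin.ext_iff]⟩
  obtain ⟨i', hi'⟩ := exists_ne i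
  exact ⟨Sum.inl i', by simp [hi']⟩


open PB in
/-- Paintbucket on the complete bipartite graph `K_{m,n}`:
(a) if `m, n > 1` the second player wins; (b) if `m > 1, n = 1` Black wins
regardless of who moves first; (c) if `m = 1, n > 1` White wins regardless of
who moves first; (d) if `m = n = 1` the first player wins. (Here
`blackWins p` means Black wins with `p = true` iff Black is to move.) -/
theorem paintbucket_complete_bipartite (m n : ℕ) :
    (1 < m → 1 < n → ¬ blackWins true (Kmn m n) ∧ blackWins false (Kmn m n)) ∧
    (1 < m → blackWins true (Kmn m 1) ∧ blackWins false (Kmn m 1)) ∧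
    (1 < n → ¬ blackWins true (Kmn 1 n) ∧ ¬ blackWins false (Kmn 1 n)) ∧
    (blackWins true (Kmn 1 1) ∧ ¬ blackWins false (Kmn 1 1)) := by
  refine ⟨fun hm hn => ⟨?_, ?_⟩, fun hm => ⟨?_, ?_⟩, fun hn => ⟨?_, ?_⟩, ?_, ?_⟩
  · -- m,n > 1 : Black to move loses
    intro hw
    unfold blackWins at hw
    rw [kmn_card] at hw
    obtain ⟨k, hk⟩ : ∃ k, m + n = k + 2 := ⟨m + n - 2, by omega⟩
    rw [hk, blackWinsAux_succ_true _ _ (by rw [kmn_card]; omega)] at hw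
    obtain ⟨v, hleg, hv⟩ := hw
    obtain ⟨j, rfl⟩ := kmn_legal_true_elim hleg
    exact star_white_wins (kmn_black_move (by omega) j) (kmn_whites_nonempty hn j) k hv
  · -- m,n > 1 : White to move loses
    unfold blackWins
    rw [kmn_card]
    obtain ⟨k, hk⟩ : ∃ k, m + n = k + 2 := ⟨m + n - 2, by omega⟩
    rw [hk, blackWinsAux_succ_false _ _ (by rw [kmn_card]; omega)]
    intro v hleg
    obtain ⟨i, rfl⟩ := kmn_legal_false_elim hleg
    exact star_black_wins (kmn_white_move (by omega) i) (kmn_blacks_nonempty hm i) k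
  · -- m > 1, n = 1 : Black to move wins
    unfold blackWins
    rw [kmn_card]
    obtain ⟨k, hk⟩ : ∃ k, m + 1 = k + 2 := ⟨m - 1, by omega⟩
    rw [hk, blackWinsAux_succ_true _ _ (by rw [kmn_card]; omega)]
    refine ⟨Sum.inr 0, kmn_legal_true (by omega) 0, ?_⟩
    have hs := kmn_black_move (m := m) (by omega) (0 : Fin 1)
    have hv1 : (move true (Kmn m 1) (Sum.inr 0)).verts = {Sum.inr 0} := by
      rw [hs.1, kmn_whites_empty]
      rfl
    exact single_black hv1 hs.2.2.1 (k + 1) false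
  · -- m > 1, n = 1 : White to move, Black wins
    unfold blackWins
    rw [kmn_card]
    obtain ⟨k, hk⟩ : ∃ k, m + 1 = k + 2 := ⟨m - 1, by omega⟩
    rw [hk, blackWinsAux_succ_false _ _ (by rw [kmn_card]; omega)]
    intro v hleg
    obtain ⟨i, rfl⟩ := kmn_legal_false_elim hleg
    exact star_black_wins (kmn_white_move one_pos i) (kmn_blacks_nonempty hm i) k
  · -- m = 1, n > 1 : Black to move loses
    intro hw
    unfold blackWins at hw
    rw [kmn_card] at hw
    obtain ⟨k, hk⟩ : ∃ k, 1 + n = k + 2 := ⟨n - 1, by omega⟩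
    rw [hk, blackWinsAux_succ_true _ _ (by rw [kmn_card]; omega)] at hw
    obtain ⟨v, hleg, hv⟩ := hw
    obtain ⟨j, rfl⟩ := kmn_legal_true_elim hleg
    exact star_white_wins (kmn_black_move one_pos j) (kmn_whites_nonempty hn j) k hv
  · -- m = 1, n > 1 : White to move, White wins
    intro hw
    unfold blackWins at hw
    rw [kmn_card] at hw
    obtain ⟨k, hk⟩ : ∃ k, 1 + n = k + 2 := ⟨n - 1, by omega⟩
    rw [hk, blackWinsAux_succ_false _ _ (by rw [kmn_card]; omega)] at hw
    have hv := hw (Sum.inl 0) (kmn_legal_false (by omega) 0)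
    have hs := kmn_white_move (n := n) (by omega) (0 : Fin 1)
    have hv1 : (move false (Kmn 1 n) (Sum.inl 0)).verts = {Sum.inl 0} := by
      rw [hs.1, kmn_blacks_empty]
      rfl
    exact single_white hv1 hs.2.2.1 (k + 1) true hv
  · -- m = n = 1 : first player (Black) wins
    unfold blackWins
    rw [kmn_card, blackWinsAux_succ_true _ _ (by rw [kmn_card]; omega)]
    refine ⟨Sum.inr 0, kmn_legal_true (by omega) 0, ?_⟩
    have hs := kmn_black_move (m := 1) one_pos (0 : Fin 1)
    have hv1 : (move true (Kmn 1 1) (Sum.inr 0)).verts = {Sum.inr 0} := by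
      rw [hs.1, kmn_whites_empty]
      rfl
    exact single_black hv1 hs.2.2.1 1 false
  · -- m = n = 1 : White to move, Black loses
    intro hw
    unfold blackWins at hw
    rw [kmn_card, blackWinsAux_succ_false _ _ (by rw [kmn_card]; omega)] at hw
    have hv := hw (Sum.inl 0) (kmn_legal_false (by omega) 0)
    have hs := kmn_white_move (m := 1) one_pos (0 : Fin 1)
    have hv1 : (move false (Kmn 1 1) (Sum.inl 0)).verts = {Sum.inl 0} := by
      rw [hs.1, kmn_blacks_empty]
      rfl
    exact single_white hv1 hs.2.2.1 1 true hv
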